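/- arXiv:2510.06923 — 2 statements merged into one kernel-verified Lean document; each statement's English description precedes it below -/
import Mathlib

section
/- Gentle Measurement Lemma: Let ρ be a density matrix on ℂ^n (a positive semidefinite complex n×n matrix with trace 1), let Π be an orthogonal projection (a complex n×n matrix with Π† = Π and Π² = Π), and let ε ∈ [0,1]. If Tr(Πρ) ≥ 1 − ε and Tr(Πρ) > 0, then the trace distance between ρ and the post-measurement state ΠρΠ/Tr(Πρ) is at most √ε, i.e. (1/2)·Tr(√((ρ − σ)†(ρ − σ))) ≤ √ε where σ = ΠρΠ/Tr(Πρ). -/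
/-!
Write `ρ = Xᴴ X` and `σ = Bᴴ B` with `B = X P / √p`, where `p = Tr (P ρ)`; then
`Tr (X Xᴴ) = Tr (B Bᴴ) = 1` and `Re Tr (B Xᴴ) = √p`.
For arbitrary `A`, `B`, pick a Hermitian involution `W` with `|Aᴴ A - Bᴴ B| = W (Aᴴ A - Bᴴ B)`.
Then `Re Tr |Aᴴ A - Bᴴ B| = Re ⟪(A + B) W, A - B⟫` for the Hilbert–Schmidt inner product, so by
Cauchy–Schwarz its square is at most `‖A - B‖² ‖A + B‖² = (‖A‖² + ‖B‖²)² - 4 (Re ⟪A, B⟫)²`.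
For `A = X` and the `B` above this is `4 - 4p ≤ 4ε`.
-/

open Matrix
open scoped ComplexOrder

noncomputable def Matrix.PosSemidef.sqrt {n 𝕜 : Type*} [Fintype n] [DecidableEq n] [RCLike 𝕜]
    {A : Matrix n n 𝕜} (hA : A.PosSemidef) : Matrix n n 𝕜 :=
  hA.1.eigenvectorUnitary.1 * diagonal ((↑) ∘ (√·) ∘ hA.1.eigenvalues) *
    (star hA.1.eigenvectorUnitary : Matrix n n 𝕜)

namespace Matrix

open scoped MatrixOrder

variable {n 𝕜 : Type*} [Fintype n] [RCLike 𝕜]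

lemma re_trace_mul_conjTranspose_comm (A B : Matrix n n 𝕜) :
    RCLike.re (A * Bᴴ).trace = RCLike.re (B * Aᴴ).trace := by
  rw [← RCLike.conj_re, ← RCLike.star_def, ← trace_conjTranspose, conjTranspose_mul,
    conjTranspose_conjTranspose]

lemma IsHermitian.coe_re_trace {A : Matrix n n 𝕜} (hA : A.IsHermitian) :
    (RCLike.re A.trace : 𝕜) = A.trace :=
  RCLike.conj_eq_iff_re.mp (by rw [← RCLike.star_def, ← trace_conjTranspose, hA.eq])

lemma IsHermitian.re_trace_mul_sub_conjTranspose_mul_self {W : Matrix n n 𝕜} (hW : W.IsHermitian)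
    (A B : Matrix n n 𝕜) :
    RCLike.re (W * (Aᴴ * A - Bᴴ * B)).trace = RCLike.re ((A - B) * ((A + B) * W)ᴴ).trace := by
  have hcross : RCLike.re (A * W * Bᴴ).trace = RCLike.re (B * W * Aᴴ).trace := by
    simpa only [conjTranspose_mul, hW.eq, mul_assoc] using re_trace_mul_conjTranspose_comm (A * W) B
  have hcycle : ∀ C : Matrix n n 𝕜, (C * W * Cᴴ).trace = (W * (Cᴴ * C)).trace := fun C => by
    rw [trace_mul_cycle, trace_mul_comm]
  simp only [conjTranspose_mul, hW.eq, conjTranspose_add, mul_add, sub_mul, mul_sub, trace_add,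
    trace_sub, map_add, map_sub, ← mul_assoc, hcycle]
  linarith

lemma re_trace_sub_mul_re_trace_add (A B : Matrix n n 𝕜) :
    RCLike.re ((A - B) * (A - B)ᴴ).trace * RCLike.re ((A + B) * (A + B)ᴴ).trace =
      (RCLike.re (A * Aᴴ).trace + RCLike.re (B * Bᴴ).trace) ^ 2 -
        4 * RCLike.re (B * Aᴴ).trace ^ 2 := by
  simp only [conjTranspose_add, conjTranspose_sub, mul_add, add_mul, mul_sub, sub_mul, trace_add,
    trace_sub, map_add, map_sub, re_trace_mul_conjTranspose_comm A B]
  ring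

lemma exists_conjTranspose_mul_self_eq_inv_trace_smul {X P : Matrix n n 𝕜} (hP : Pᴴ = P)
    (hP2 : P * P = P) (hpos : 0 < RCLike.re (P * (Xᴴ * X)).trace) :
    ∃ B : Matrix n n 𝕜, Bᴴ * B = (P * (Xᴴ * X)).trace⁻¹ • (P * (Xᴴ * X) * P) ∧
      RCLike.re (B * Bᴴ).trace = 1 ∧
      RCLike.re (B * Xᴴ).trace = √(RCLike.re (P * (Xᴴ * X)).trace) := by
  set p := RCLike.re (P * (Xᴴ * X)).trace
  have hXPX : (X * P) * (X * P)ᴴ = X * P * Xᴴ := by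
    rw [conjTranspose_mul, hP, ← mul_assoc, mul_assoc X, hP2]
  have hcycle : (X * P * Xᴴ).trace = (P * (Xᴴ * X)).trace := by
    rw [trace_mul_cycle, trace_mul_comm]
  have htr : (P * (Xᴴ * X)).trace = p := by
    have hreal := (isHermitian_mul_conjTranspose_self (X * P)).coe_re_trace
    rwa [hXPX, hcycle, eq_comm] at hreal
  have hsqrt : (√p)⁻¹ * (√p)⁻¹ = p⁻¹ := by rw [← mul_inv, Real.mul_self_sqrt hpos.le]
  refine ⟨(√p)⁻¹ • (X * P), ?_, ?_, ?_⟩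
  · rw [htr, conjTranspose_smul, star_trivial, smul_mul_smul, hsqrt, conjTranspose_mul, hP,
      ← RCLike.ofReal_inv, RCLike.real_smul_eq_coe_smul (K := 𝕜)]
    simp only [mul_assoc]
  · rw [conjTranspose_smul, star_trivial, smul_mul_smul, hsqrt, hXPX, trace_smul, hcycle, htr,
      RCLike.smul_re, RCLike.ofReal_re, inv_mul_cancel₀ hpos.ne']
  · rw [smul_mul_assoc, trace_smul, hcycle, htr, RCLike.smul_re, RCLike.ofReal_re,
      inv_mul_eq_div, Real.div_sqrt]

variable [DecidableEq n]

lemma PosSemidef.exists_eq_conjTranspose_mul_self {A : Matrix n n 𝕜} (hA : A.PosSemidef) :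
    ∃ X : Matrix n n 𝕜, A = Xᴴ * X :=
  CStarAlgebra.nonneg_iff_eq_star_mul_self.mp hA.nonneg

lemma PosSemidef.sqrt_eq_cfcSqrt {A : Matrix n n 𝕜} (hA : A.PosSemidef) :
    hA.sqrt = CFC.sqrt A := by
  rw [CFC.sqrt_eq_real_sqrt A hA.nonneg, cfcₙ_eq_cfc, hA.1.cfc_eq, IsHermitian.cfc,
    Unitary.conjStarAlgAut_apply]
  rfl

lemma sqrt_posSemidef_conjTranspose_mul_self_eq_cfcAbs (A : Matrix n n 𝕜) :
    (posSemidef_conjTranspose_mul_self A).sqrt = CFC.abs A :=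
  PosSemidef.sqrt_eq_cfcSqrt _

lemma IsHermitian.exists_cfcAbs_eq_mul {A : Matrix n n 𝕜} (hA : A.IsHermitian) :
    ∃ W : Matrix n n 𝕜, W.IsHermitian ∧ W * W = 1 ∧ CFC.abs A = W * A := by
  let sign : ℝ → ℝ := fun x => if 0 ≤ x then 1 else -1
  -- the spectrum is finite, so the discontinuity of `sign` is harmless
  have hcont : ContinuousOn sign (spectrum ℝ A) := A.finite_real_spectrum.continuousOn _
  refine ⟨cfc sign A, cfc_predicate sign A, ?_, ?_⟩
  · rw [← cfc_mul sign sign A, ← cfc_const_one ℝ A]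
    refine cfc_congr fun x _ => ?_
    by_cases hx : 0 ≤ x <;> simp [sign, hx]
  · have habs : CFC.abs A = cfc (fun x => sign x * x) A := by
      rw [CFC.abs_eq_cfc_norm A hA.isSelfAdjoint]
      refine cfc_congr fun x _ => ?_
      by_cases hx : 0 ≤ x
      · simp [sign, hx, abs_of_nonneg hx]
      · simp [sign, hx, abs_of_neg (not_le.mp hx)]
    rw [habs, cfc_mul sign (fun x => x) A, cfc_id' ℝ A hA.isSelfAdjoint]

lemma sq_re_trace_mul_conjTranspose_le (X Y : Matrix n n 𝕜) :
    RCLike.re (Y * Xᴴ).trace ^ 2 ≤ RCLike.re (X * Xᴴ).trace * RCLike.re (Y * Yᴴ).trace := by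
  -- the Hilbert–Schmidt inner product `⟪X, Y⟫ = Tr (Y Xᴴ)`
  let := toMatrixSeminormedAddCommGroup (1 : Matrix n n 𝕜) PosSemidef.one
  let := toMatrixInnerProductSpace (1 : Matrix n n 𝕜) PosSemidef.one
  have hinner : ∀ X Y : Matrix n n 𝕜, inner 𝕜 X Y = (Y * Xᴴ).trace := fun X Y => by
    show (Y * 1 * Xᴴ).trace = _
    rw [mul_one]
  rw [← hinner, ← hinner, ← hinner, ← norm_sq_eq_re_inner, ← norm_sq_eq_re_inner, ← mul_pow,
    sq_le_sq, abs_of_nonneg (mul_nonneg (norm_nonneg X) (norm_nonneg Y))]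
  exact (RCLike.abs_re_le_norm _).trans (norm_inner_le_norm X Y)

theorem sq_re_trace_cfcAbs_sub_le (A B : Matrix n n 𝕜) :
    RCLike.re (CFC.abs (Aᴴ * A - Bᴴ * B)).trace ^ 2 ≤
      (RCLike.re (A * Aᴴ).trace + RCLike.re (B * Bᴴ).trace) ^ 2 -
        4 * RCLike.re (B * Aᴴ).trace ^ 2 := by
  obtain ⟨W, hW, hWW, habs⟩ := ((isHermitian_conjTranspose_mul_self A).sub
    (isHermitian_conjTranspose_mul_self B)).exists_cfcAbs_eq_mul
  have hWunit : (A + B) * W * ((A + B) * W)ᴴ = (A + B) * (A + B)ᴴ := by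
    rw [conjTranspose_mul, hW.eq, mul_assoc, ← mul_assoc W, hWW, one_mul]
  rw [habs, hW.re_trace_mul_sub_conjTranspose_mul_self, ← re_trace_sub_mul_re_trace_add, mul_comm,
    ← hWunit]
  exact sq_re_trace_mul_conjTranspose_le _ _

end Matrix

theorem gentle_measurement_general {n : ℕ} (ρ P : Matrix (Fin n) (Fin n) ℂ)
    (hρ : ρ.PosSemidef) (hρtr : ρ.trace = 1)
    (hP : Pᴴ = P) (hP2 : P * P = P)
    (ε : ℝ)
    (hacc : 1 - ε ≤ ((P * ρ).trace).re) (hpos : 0 < ((P * ρ).trace).re)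
    (σ : Matrix (Fin n) (Fin n) ℂ)
    (hσ : σ = ((P * ρ).trace)⁻¹ • (P * ρ * P)) :
    (1 / 2) * ((Matrix.posSemidef_conjTranspose_mul_self (ρ - σ)).sqrt.trace).re
      ≤ Real.sqrt ε := by
  obtain ⟨X, rfl⟩ := hρ.exists_eq_conjTranspose_mul_self
  obtain ⟨B, hσB, hBB, hBX⟩ := exists_conjTranspose_mul_self_eq_inv_trace_smul hP hP2 hpos
  have hXX : (X * Xᴴ).trace.re = 1 := by rw [trace_mul_comm, hρtr, Complex.one_re]
  have key := sq_re_trace_cfcAbs_sub_le X B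
  simp only [RCLike.re_to_complex, hXX, hBB, hBX, Real.sq_sqrt hpos.le] at key
  rw [sqrt_posSemidef_conjTranspose_mul_self_eq_cfcAbs, hσ, ← hσB]
  refine (le_abs_self _).trans (Real.abs_le_sqrt ?_)
  nlinarith

/-- Gentle Measurement Lemma: if a projective measurement `P` accepts the density matrix `ρ`
with probability at least `1 - ε`, then the post-measurement state `P ρ P / Tr(P ρ)` is within
trace distance `√ε` of `ρ`. -/
theorem gentle_measurement {n : ℕ} (ρ P : Matrix (Fin n) (Fin n) ℂ)
    (hρ : ρ.PosSemidef) (hρtr : ρ.trace = 1)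
    (hP : Pᴴ = P) (hP2 : P * P = P)
    (ε : ℝ) (hε0 : 0 ≤ ε) (hε1 : ε ≤ 1)
    (hacc : 1 - ε ≤ ((P * ρ).trace).re) (hpos : 0 < ((P * ρ).trace).re)
    (σ : Matrix (Fin n) (Fin n) ℂ)
    (hσ : σ = ((P * ρ).trace)⁻¹ • (P * ρ * P)) :
    (1 / 2) * ((Matrix.posSemidef_conjTranspose_mul_self (ρ - σ)).sqrt.trace).re
      ≤ Real.sqrt ε :=
  gentle_measurement_general ρ P hρ hρtr hP hP2 ε hacc hpos σ hσ
end

section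
/- Uhlmann unitary for pure states with equal reduced densities: Let ψ, φ ∈ ℂ^(a·b) be unit vectors indexed by Fin a × Fin b. Suppose their reduced states on the first factor coincide, i.e. ∑_{y ∈ Fin b} ψ(x,y)·conj(ψ(x',y)) = ∑_{y ∈ Fin b} φ(x,y)·conj(φ(x',y)) for all x, x' ∈ Fin a. Then there exists a unitary matrix U ∈ Matrix (Fin b) (Fin b) ℂ such that for all (x,y) ∈ Fin a × Fin b, φ(x,y) = ∑_{y' ∈ Fin b} U_{y,y'}·ψ(x,y'), i.e. (Id_a ⊗ U)·ψ = φ. -/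
/-!
Write `ψ` and `φ` as `a × b` matrices `M` and `N`; equality of the reduced states says
`M * Mᴴ = N * Nᴴ`. Hence `u ↦ Mᴴ u` and `u ↦ Nᴴ u` have the same norms, so `Mᴴ u ↦ Nᴴ u` is a
well-defined isometry on the range of `Mᴴ`. Extending it to a unitary `W` of `ℂ^b` gives
`W * Mᴴ = Nᴴ`, that is `N = M * Wᴴ`.
-/

open Matrix
open scoped InnerProductSpace

theorem LinearMap.exists_linearIsometry_apply_eq_of_norm_eq {𝕜 E F : Type*} [RCLike 𝕜]
    [AddCommGroup E] [Module 𝕜 E] [NormedAddCommGroup F] [InnerProductSpace 𝕜 F]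
    [FiniteDimensional 𝕜 F] (f g : E →ₗ[𝕜] F) (h : ∀ u, ‖f u‖ = ‖g u‖) :
    ∃ L : F →ₗᵢ[𝕜] F, ∀ u, L (f u) = g u := by
  have hker : ker f ≤ ker g := fun u hu => by
    rw [mem_ker, ← norm_eq_zero, ← h, norm_eq_zero.mpr hu]
  let L₀ : range f →ₗ[𝕜] F := ((ker f).liftQ g hker).comp f.quotKerEquivRange.symm.toLinearMap
  have hL₀ (u : E) : L₀ ⟨f u, mem_range_self f u⟩ = g u := by
    simp [L₀, f.quotKerEquivRange_symm_apply_image u (mem_range_self f u)]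
  let L : range f →ₗᵢ[𝕜] F := ⟨L₀, by rintro ⟨_, u, rfl⟩; rw [hL₀]; exact (h u).symm⟩
  exact ⟨L.extend, fun u => (L.extend_apply ⟨f u, _⟩).trans (hL₀ u)⟩

namespace Matrix

variable {𝕜 m n : Type*} [RCLike 𝕜] [Fintype m] [DecidableEq m] [Fintype n] [DecidableEq n]

theorem inner_toEuclideanLin_toEuclideanLin (A : Matrix m n 𝕜)
    (u v : EuclideanSpace 𝕜 n) :
    ⟪toEuclideanLin A u, toEuclideanLin A v⟫_𝕜 = ⟪u, toEuclideanLin (Aᴴ * A) v⟫_𝕜 := by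
  rw [toLpLin_mul_same, toEuclideanLin_conjTranspose_eq_adjoint, LinearMap.comp_apply,
    LinearMap.adjoint_inner_right]

theorem exists_mem_unitaryGroup_mul_eq_of_conjTranspose_mul_eq {A B : Matrix m n 𝕜}
    (h : Aᴴ * A = Bᴴ * B) : ∃ W ∈ unitaryGroup m 𝕜, W * A = B := by
  have hnorm (u : EuclideanSpace 𝕜 n) : ‖toEuclideanLin A u‖ = ‖toEuclideanLin B u‖ := by
    rw [norm_eq_sqrt_re_inner (𝕜 := 𝕜), norm_eq_sqrt_re_inner (𝕜 := 𝕜),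
      inner_toEuclideanLin_toEuclideanLin, inner_toEuclideanLin_toEuclideanLin, h]
  obtain ⟨L, hL⟩ := LinearMap.exists_linearIsometry_apply_eq_of_norm_eq _ _ hnorm
  let e : EuclideanSpace 𝕜 m ≃ₗᵢ[𝕜] EuclideanSpace 𝕜 m := L.toLinearIsometryEquiv rfl
  refine ⟨(toEuclideanCLM (n := m) (𝕜 := 𝕜)).symm (e : EuclideanSpace 𝕜 m →L[𝕜] EuclideanSpace 𝕜 m),
    Unitary.map_mem _ (Unitary.linearIsometryEquiv.symm e).2, ?_⟩
  apply (toEuclideanLin (𝕜 := 𝕜)).injective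
  ext1 u
  rw [toLpLin_mul_same, LinearMap.comp_apply, ← coe_toEuclideanCLM_eq_toEuclideanLin,
    StarAlgEquiv.apply_symm_apply]
  exact hL u

theorem exists_mem_unitaryGroup_eq_mul_of_mul_conjTranspose_eq {M N : Matrix m n 𝕜}
    (h : M * Mᴴ = N * Nᴴ) : ∃ U ∈ unitaryGroup n 𝕜, N = M * U := by
  obtain ⟨W, hW, hWM⟩ := exists_mem_unitaryGroup_mul_eq_of_conjTranspose_mul_eq
    (A := Mᴴ) (B := Nᴴ) (by simpa using h)
  refine ⟨star W, Unitary.star_mem hW, ?_⟩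
  rw [← conjTranspose_conjTranspose N, ← hWM, conjTranspose_mul, conjTranspose_conjTranspose,
    star_eq_conjTranspose]

end Matrix

theorem uhlmann_unitary_of_eq_reduced_general {a b : ℕ}
    (ψ φ : EuclideanSpace ℂ (Fin a × Fin b))
    (hred : ∀ x x' : Fin a,
      ∑ y : Fin b, ψ (x, y) * starRingEnd ℂ (ψ (x', y)) =
      ∑ y : Fin b, φ (x, y) * starRingEnd ℂ (φ (x', y))) :
    ∃ U : Matrix (Fin b) (Fin b) ℂ,
      U * Uᴴ = 1 ∧ Uᴴ * U = 1 ∧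
      ∀ x : Fin a, ∀ y : Fin b, φ (x, y) = ∑ y' : Fin b, U y y' * ψ (x, y') := by
  let M : Matrix (Fin a) (Fin b) ℂ := .of fun x y => ψ (x, y)
  let N : Matrix (Fin a) (Fin b) ℂ := .of fun x y => φ (x, y)
  have hMN : M * Mᴴ = N * Nᴴ := by
    ext x x'
    simpa [M, N, mul_apply] using hred x x'
  obtain ⟨V, hV, hNM⟩ := exists_mem_unitaryGroup_eq_mul_of_mul_conjTranspose_eq hMN
  have hU : Vᵀ ∈ unitaryGroup (Fin b) ℂ := transpose_mem_unitaryGroup_iff.mpr hV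
  refine ⟨Vᵀ, mem_unitaryGroup_iff.mp hU, mem_unitaryGroup_iff'.mp hU, fun x y => ?_⟩
  simpa [M, N, mul_apply, mul_comm] using congr_fun₂ hNM x y

/-- Uhlmann unitary for pure states with equal reduced densities: if two unit vectors
`ψ, φ` on `ℂ^a ⊗ ℂ^b` have the same reduced state on the first factor, then there is a
unitary `U` on the second factor with `(Id_a ⊗ U)·ψ = φ`. -/
theorem uhlmann_unitary_of_eq_reduced {a b : ℕ}
    (ψ φ : EuclideanSpace ℂ (Fin a × Fin b)) (hψ : ‖ψ‖ = 1) (hφ : ‖φ‖ = 1)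
    (hred : ∀ x x' : Fin a,
      ∑ y : Fin b, ψ (x, y) * starRingEnd ℂ (ψ (x', y)) =
      ∑ y : Fin b, φ (x, y) * starRingEnd ℂ (φ (x', y))) :
    ∃ U : Matrix (Fin b) (Fin b) ℂ,
      U * Uᴴ = 1 ∧ Uᴴ * U = 1 ∧
      ∀ x : Fin a, ∀ y : Fin b, φ (x, y) = ∑ y' : Fin b, U y y' * ψ (x, y') :=
  uhlmann_unitary_of_eq_reduced_general ψ φ hred
end
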